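/- arXiv:math/0501418 — 2 statements merged into one kernel-verified Lean document; each statement's English description precedes it below -/
import Mathlib

section
/- Let A and B be lattices, with A bounded. Then the elements of A ⊠ B are exactly the finite intersections H = ⋂_{i<n}(a_i □ b_i) with n > 0, ⟨a_i,b_i⟩ ∈ A × B, satisfying ⋀_{i<n} a_i = 0_A. Furthermore, every element of A ⊠ B can be written as a finite union (0_A □ x) ∪ ⋃_{i<n}(a_i ∘ b_i), where x ∈ B and n ≥ 0, and conversely the box closure of any set of this form belongs to A ⊠ B. -/
/-- The pure box `a □ b = {⟨x,y⟩ : x ≤ a or y ≤ b}`. -/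
def pureBox {A B : Type*} [Lattice A] [Lattice B] (a : A) (b : B) : Set (A × B) :=
  {p : A × B | p.1 ≤ a ∨ p.2 ≤ b}

/-- `a ∘ b = {⟨x,y⟩ : x ≤ a and y ≤ b}`. -/
def pureCirc {A B : Type*} [Lattice A] [Lattice B] (a : A) (b : B) : Set (A × B) :=
  {p : A × B | p.1 ≤ a ∧ p.2 ≤ b}

/-- The box product `A □ B`: all finite (nonempty) intersections of pure boxes. -/
def BoxProd (A B : Type*) [Lattice A] [Lattice B] : Set (Set (A × B)) :=
  {H | ∃ (n : ℕ) (a : Fin (n + 1) → A) (b : Fin (n + 1) → B),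
    H = ⋂ i, pureBox (a i) (b i)}

/-- `A ⊡ B`: all finite unions of pure boxes (at least one) and pure circles. -/
def BoxDot (A B : Type*) [Lattice A] [Lattice B] : Set (Set (A × B)) :=
  {H | ∃ (m n : ℕ) (a : Fin (m + 1) → A) (b : Fin (m + 1) → B)
      (c : Fin n → A) (d : Fin n → B),
    H = (⋃ i, pureBox (a i) (b i)) ∪ ⋃ j, pureCirc (c j) (d j)}

/-- The box closure of a subset of `A × B`: intersection of all pure boxes containing it. -/
def BoxCl {A B : Type*} [Lattice A] [Lattice B] (X : Set (A × B)) : Set (A × B) :=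
  ⋂ (a : A) (b : B) (_ : X ⊆ pureBox a b), pureBox a b

/-- The pure lattice tensor `a ⊠ b = (a ∘ b) ∪ ⊥_{A,B}`, where `⊥_{A,B}` consists of
the pairs one of whose coordinates is a least element. -/
def pureTens {A B : Type*} [Lattice A] [Lattice B] (a : A) (b : B) : Set (A × B) :=
  pureCirc a b ∪ {p : A × B | IsBot p.1 ∨ IsBot p.2}

/-- A subset of `A × B` is confined if it is contained in some pure lattice tensor. -/
def Confined {A B : Type*} [Lattice A] [Lattice B] (X : Set (A × B)) : Prop :=
  ∃ (a : A) (b : B), X ⊆ pureTens a b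

/-- The lattice tensor product `A ⊠ B`: all confined elements of `A □ B`. -/
def LatTens (A B : Type*) [Lattice A] [Lattice B] : Set (Set (A × B)) :=
  {H | H ∈ BoxProd A B ∧ Confined H}

/-- `X^△ = {⟨a,b⟩ : ⟨x,y⟩ ◁ ⟨a,b⟩ for all ⟨x,y⟩ ∈ X}` where `⟨x,y⟩ ◁ ⟨a,b⟩` iff
`x ≤ a` or `y ≤ b`. -/
def trUp {A B : Type*} [Lattice A] [Lattice B] (X : Set (A × B)) : Set (A × B) :=
  {p : A × B | ∀ q ∈ X, q.1 ≤ p.1 ∨ q.2 ≤ p.2}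

/-- `X^▽ = {⟨a,b⟩ : ⟨a,b⟩ ◁ ⟨x,y⟩ for all ⟨x,y⟩ ∈ X}`. -/
def trDown {A B : Type*} [Lattice A] [Lattice B] (X : Set (A × B)) : Set (A × B) :=
  {p : A × B | ∀ q ∈ X, p.1 ≤ q.1 ∨ p.2 ≤ q.2}

/-!
Distributing `⋂ᵢ (aᵢ □ bᵢ) = ⋂ᵢ ({u ≤ aᵢ} ∪ {v ≤ bᵢ})` over the unions gives
`⋃_S (⋀_{i ∈ S} aᵢ) ∘ (⋀_{i ∉ S} bᵢ)`. When `⋀ aᵢ = 0` the term `S = univ` is the row `u = 0`,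
absorbed by `0 □ ⋀ bᵢ`, and the same condition confines `⋂ᵢ (aᵢ □ bᵢ)` in `1 ⊠ ⋁ bᵢ`.
Conversely a confined `H ⊆ c ⊠ d ⊆ 0 □ d` is unchanged by intersecting with the extra box `0 □ d`.
Dually, a box `c □ d` with `c ≠ 1` contains `(0 □ x) ∪ ⋃ᵢ (aᵢ ∘ bᵢ)` iff it contains
`(⋁_{i ∈ T} aᵢ) □ (x ⊔ ⋁_{i ∉ T} bᵢ)` for `T = {i : aᵢ ≤ c}`, so the box closure is the
intersection of these boxes, and `T = ∅` contributes the first coordinate `0`.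
-/

open Finset

theorem fold_sup_le_iff {β ι : Type*} [SemilatticeSup β] {x d : β} {b : ι → β} {T : Finset ι} :
    T.fold (· ⊔ · : β → β → β) x b ≤ d ↔ x ≤ d ∧ ∀ i ∈ T, b i ≤ d :=
  fold_op_rel_iff_and (r := fun d y => y ≤ d) sup_le_iff

section Lattice

variable {A B ι : Type*} [Lattice A] [Lattice B]

theorem pureBox_mono {a a' : A} {b b' : B} (ha : a ≤ a') (hb : b ≤ b') :
    pureBox a b ⊆ pureBox a' b' :=
  fun _ hp => hp.imp (le_trans · ha) (le_trans · hb)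

theorem boxCl_subset {X : Set (A × B)} {c : A} {d : B} (h : X ⊆ pureBox c d) :
    BoxCl X ⊆ pureBox c d := by
  intro p hp
  simp only [BoxCl, Set.mem_iInter] at hp
  exact hp c d h

theorem iInter_snoc_pureBox {n : ℕ} (a : Fin n → A) (b : Fin n → B) (c : A) (d : B) :
    ⋂ i, pureBox (Fin.snoc (α := fun _ => A) a c i) (Fin.snoc (α := fun _ => B) b d i) =
      (⋂ i, pureBox (a i) (b i)) ∩ pureBox c d := by
  ext p
  simp [Fin.forall_fin_succ']

theorem iInter_pureBox_mem_boxProd [Finite ι] [Nonempty ι] (a : ι → A) (b : ι → B) :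
    ⋂ i, pureBox (a i) (b i) ∈ BoxProd A B := by
  obtain ⟨n, ⟨e⟩⟩ := Finite.exists_equiv_fin ι
  obtain ⟨m, rfl⟩ := Nat.exists_eq_succ_of_ne_zero (Fin.pos_iff_nonempty.2 e.symm.nonempty).ne'
  exact ⟨m, a ∘ e.symm, b ∘ e.symm,
    (e.symm.surjective.iInter_comp fun i => pureBox (a i) (b i)).symm⟩

section BoundedOrder

variable [BoundedOrder A]

theorem pureTens_subset_pureBox_bot (c : A) (d : B) : pureTens c d ⊆ pureBox ⊥ d := by
  rintro p (⟨-, h⟩ | h | h)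
  exacts [Or.inr h, Or.inl (h ⊥), Or.inr (h d)]

theorem iInter_pureBox_subset_pureTens [Fintype ι] [Nonempty ι] {a : ι → A} (b : ι → B)
    (ha : univ.inf a = ⊥) :
    ⋂ i, pureBox (a i) (b i) ⊆ pureTens ⊤ (univ.sup' univ_nonempty b) := by
  intro p hp
  rw [Set.mem_iInter] at hp
  by_cases hle : ∀ i, p.1 ≤ a i
  · have : p.1 ≤ ⊥ := ha ▸ Finset.le_inf fun i _ => hle i
    exact Or.inr (Or.inl fun z => this.trans bot_le)
  · obtain ⟨i, hi⟩ := not_forall.1 hle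
    exact Or.inl ⟨le_top, ((hp i).resolve_left hi).trans (le_sup' b (mem_univ i))⟩

theorem iInter_pureBox_mem_latTens [Fintype ι] [Nonempty ι] {a : ι → A} (b : ι → B)
    (ha : univ.inf a = ⊥) : ⋂ i, pureBox (a i) (b i) ∈ LatTens A B :=
  ⟨iInter_pureBox_mem_boxProd a b, ⊤, _, iInter_pureBox_subset_pureTens b ha⟩

theorem mem_latTens_iff {H : Set (A × B)} :
    H ∈ LatTens A B ↔ ∃ (n : ℕ) (a : Fin (n + 1) → A) (b : Fin (n + 1) → B),
      H = ⋂ i, pureBox (a i) (b i) ∧ univ.inf' univ_nonempty a = ⊥ := by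
  constructor
  · rintro ⟨⟨n, a, b, rfl⟩, c, d, hcd⟩
    refine ⟨n + 1, Fin.snoc a ⊥, Fin.snoc b d, ?_, ?_⟩
    · rw [iInter_snoc_pureBox, Set.inter_eq_left.2 (hcd.trans (pureTens_subset_pureBox_bot c d))]
    · exact le_bot_iff.1 ((inf'_le _ (mem_univ (Fin.last _))).trans (Fin.snoc_last _ _).le)
  · rintro ⟨n, a, b, rfl, ha⟩
    exact iInter_pureBox_mem_latTens b (inf'_eq_inf univ_nonempty a ▸ ha)

theorem iInter_pureBox_eq_union_pureCirc [Fintype ι] [DecidableEq ι] {a : ι → A} {b : ι → B}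
    {x : B} (ha : univ.inf a = ⊥) (hx : ∀ i, x ≤ b i) :
    ⋂ i, pureBox (a i) (b i) = pureBox ⊥ x ∪
      ⋃ S : {S : Finset ι // Sᶜ.Nonempty}, pureCirc (S.1.inf a) (S.1ᶜ.inf' S.2 b) := by
  classical
  apply subset_antisymm
  · intro p hp
    rw [Set.mem_iInter] at hp
    by_cases hle : ∀ i, p.1 ≤ a i
    · exact Or.inl (Or.inl (ha ▸ Finset.le_inf fun i _ => hle i))
    · obtain ⟨i, hi⟩ := not_forall.1 hle
      let S := univ.filter fun i => p.1 ≤ a i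
      refine Or.inr (Set.mem_iUnion.2 ⟨⟨S, i, by simpa [S] using hi⟩, ?_, ?_⟩)
      · exact Finset.le_inf fun j hj => (mem_filter.1 hj).2
      · exact le_inf' _ _ fun j hj => (hp j).resolve_left (by simpa [S] using hj)
  · rintro p ((hp | hp) | hp) <;> refine Set.mem_iInter.2 fun i => ?_
    · exact Or.inl (hp.trans bot_le)
    · exact Or.inr (hp.trans (hx i))
    · obtain ⟨⟨S, hS⟩, hp1, hp2⟩ := Set.mem_iUnion.1 hp
      by_cases hi : i ∈ S
      · exact Or.inl (hp1.trans (inf_le hi))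
      · exact Or.inr (hp2.trans (inf'_le _ (mem_compl.2 hi)))

theorem union_pureCirc_subset_pureBox_iff {x : B} {a : ι → A} {b : ι → B} {c : A} {d : B} :
    pureBox ⊥ x ∪ ⋃ i, pureCirc (a i) (b i) ⊆ pureBox c d ↔
      (⊤ ≤ c ∨ x ≤ d) ∧ ∀ i, a i ≤ c ∨ b i ≤ d := by
  constructor
  · intro h
    refine ⟨h (Or.inl (Or.inr le_rfl) : ((⊤ : A), x) ∈ _), fun i => @h (a i, b i) ?_⟩
    exact Or.inr (Set.mem_iUnion.2 ⟨i, le_rfl, le_rfl⟩)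
  · rintro ⟨hx, hab⟩ p ((hp | hp) | hp)
    · exact Or.inl (hp.trans bot_le)
    · exact hx.imp (le_top.trans) hp.trans
    · obtain ⟨i, hp1, hp2⟩ := Set.mem_iUnion.1 hp
      exact (hab i).imp hp1.trans hp2.trans

theorem boxCl_union_pureCirc_eq_iInter [Fintype ι] [DecidableEq ι] (x : B) (a : ι → A)
    (b : ι → B) :
    BoxCl (pureBox ⊥ x ∪ ⋃ i, pureCirc (a i) (b i)) =
      ⋂ T : Finset ι, pureBox (T.sup a) (Tᶜ.fold (· ⊔ · : B → B → B) x b) := by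
  apply subset_antisymm
  · refine Set.subset_iInter fun T => boxCl_subset (union_pureCirc_subset_pureBox_iff.2 ?_)
    refine ⟨Or.inr (fold_sup_le_iff.1 le_rfl).1, fun i => ?_⟩
    by_cases hi : i ∈ T
    · exact Or.inl (le_sup hi)
    · exact Or.inr ((fold_sup_le_iff.1 le_rfl).2 i (mem_compl.2 hi))
  · classical
    intro p hp
    simp only [BoxCl, Set.mem_iInter] at hp ⊢
    intro c d hcd
    obtain ⟨hx, hab⟩ := union_pureCirc_subset_pureBox_iff.1 hcd
    refine hx.elim (fun hc => Or.inl (le_top.trans hc)) fun hx => ?_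
    let T := univ.filter fun i => a i ≤ c
    refine pureBox_mono ?_ ?_ (hp T)
    · exact Finset.sup_le fun i hi => (mem_filter.1 hi).2
    · exact fold_sup_le_iff.2 ⟨hx, fun i hi => (hab i).resolve_left (by simpa [T] using hi)⟩

end BoundedOrder

end Lattice

/-- For `A` bounded: description of the elements of `A ⊠ B` as finite intersections
of pure boxes whose first coordinates meet to zero, and as finite unions
`(0_A □ x) ∪ ⋃ (a_i ∘ b_i)`. -/
theorem stmt_9 {A B : Type*} [Lattice A] [BoundedOrder A] [Lattice B] :
    (∀ H : Set (A × B), H ∈ LatTens A B ↔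
      ∃ (n : ℕ) (a : Fin (n + 1) → A) (b : Fin (n + 1) → B),
        H = ⋂ i, pureBox (a i) (b i) ∧
        Finset.univ.inf' Finset.univ_nonempty a = ⊥) ∧
    (∀ H ∈ LatTens A B, ∃ (x : B) (n : ℕ) (a : Fin n → A) (b : Fin n → B),
      H = pureBox (⊥ : A) x ∪ ⋃ i, pureCirc (a i) (b i)) ∧
    ∀ (x : B) (n : ℕ) (a : Fin n → A) (b : Fin n → B),
      BoxCl (pureBox (⊥ : A) x ∪ ⋃ i, pureCirc (a i) (b i)) ∈ LatTens A B := by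
  refine ⟨fun H => mem_latTens_iff, fun H hH => ?_, fun x n a b => ?_⟩
  · obtain ⟨n, a, b, rfl, ha⟩ := mem_latTens_iff.1 hH
    rw [inf'_eq_inf] at ha
    obtain ⟨m, ⟨e⟩⟩ := Finite.exists_equiv_fin {S : Finset (Fin (n + 1)) // Sᶜ.Nonempty}
    refine ⟨univ.inf' univ_nonempty b, m, fun j => (e.symm j).1.inf a,
      fun j => (e.symm j).1ᶜ.inf' (e.symm j).2 b, ?_⟩
    rw [iInter_pureBox_eq_union_pureCirc (x := univ.inf' univ_nonempty b) ha
      fun i => inf'_le b (mem_univ i), ← e.symm.surjective.iUnion_comp]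
  · rw [boxCl_union_pureCirc_eq_iInter]
    exact iInter_pureBox_mem_latTens _ (le_bot_iff.1 ((inf_le (mem_univ ∅)).trans_eq sup_empty))
end

section
/- Let A and B be lattices with least elements, let a_0, a_1 ∈ A and b_0, b_1 ∈ B. Then (a_0 ⊠ b_0) ∩ (a_1 ⊠ b_1) = (a_0 ∧ a_1) ⊠ (b_0 ∧ b_1), and the join in A ⊠ B satisfies (a_0 ⊠ b_0) ∨ (a_1 ⊠ b_1) = (a_0 ⊠ b_0) ∪ (a_1 ⊠ b_1) ∪ ((a_0 ∨ a_1) ⊠ (b_0 ∧ b_1)) ∪ ((a_0 ∧ a_1) ⊠ (b_0 ∨ b_1)). In particular, if a_0 ≤ a_1 and b_0 ≥ b_1, or a_0 ≥ a_1 and b_0 ≤ b_1, then (a_0 ⊠ b_0) ∨ (a_1 ⊠ b_1) = (a_0 ⊠ b_0) ∪ (a_1 ⊠ b_1). -/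
section PureTensor

variable {A B : Type*} [Lattice A] [Lattice B]

lemma mem_pureTens {a x : A} {b y : B} :
    (x, y) ∈ pureTens a b ↔ (x ≤ a ∧ y ≤ b) ∨ IsBot x ∨ IsBot y :=
  Iff.rfl

lemma pureTens_subset_pureBox_iff {a u : A} {b v : B} :
    pureTens a b ⊆ pureBox u v ↔ a ≤ u ∨ b ≤ v := by
  refine ⟨fun h => h (show (a, b) ∈ pureTens a b from Or.inl ⟨le_rfl, le_rfl⟩), fun h => ?_⟩
  rintro ⟨x, y⟩ (⟨hx, hy⟩ | hx | hy)
  · exact h.imp hx.trans hy.trans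
  · exact Or.inl (hx u)
  · exact Or.inr (hy v)

lemma pureTens_union_subset_pureBox_iff {a₀ a₁ u : A} {b₀ b₁ v : B} :
    pureTens a₀ b₀ ∪ pureTens a₁ b₁ ⊆ pureBox u v ↔
      (a₀ ≤ u ∨ b₀ ≤ v) ∧ (a₁ ≤ u ∨ b₁ ≤ v) := by
  rw [Set.union_subset_iff, pureTens_subset_pureBox_iff, pureTens_subset_pureBox_iff]

lemma pureTens_inter_pureTens (a₀ a₁ : A) (b₀ b₁ : B) :
    pureTens a₀ b₀ ∩ pureTens a₁ b₁ = pureTens (a₀ ⊓ a₁) (b₀ ⊓ b₁) := by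
  ext ⟨x, y⟩
  simp only [Set.mem_inter_iff, mem_pureTens, le_inf_iff]
  tauto

lemma mem_boxCl {X : Set (A × B)} {p : A × B} :
    p ∈ BoxCl X ↔ ∀ u v, X ⊆ pureBox u v → p ∈ pureBox u v := by
  simp only [BoxCl, Set.mem_iInter]

lemma subset_boxCl (X : Set (A × B)) : X ⊆ BoxCl X :=
  fun _ hp => mem_boxCl.2 fun _ _ hX => hX hp

lemma pureTens_subset_boxCl {X : Set (A × B)} {a : A} {b : B}
    (h : ∀ u v, X ⊆ pureBox u v → a ≤ u ∨ b ≤ v) : pureTens a b ⊆ BoxCl X :=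
  fun _ hp => mem_boxCl.2 fun u v hX => pureTens_subset_pureBox_iff.2 (h u v hX) hp

lemma boxCl_pureTens_union_pureTens_subset [OrderBot A] [OrderBot B] (a₀ a₁ : A) (b₀ b₁ : B) :
    BoxCl (pureTens a₀ b₀ ∪ pureTens a₁ b₁) ⊆
      pureTens a₀ b₀ ∪ pureTens a₁ b₁ ∪ pureTens (a₀ ⊔ a₁) (b₀ ⊓ b₁) ∪
        pureTens (a₀ ⊓ a₁) (b₀ ⊔ b₁) := by
  rintro ⟨x, y⟩ hp
  have box u v (h₀ : a₀ ≤ u ∨ b₀ ≤ v) (h₁ : a₁ ≤ u ∨ b₁ ≤ v) : x ≤ u ∨ y ≤ v :=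
    mem_boxCl.1 hp u v (pureTens_union_subset_pureBox_iff.2 ⟨h₀, h₁⟩)
  have hsup_bot := box (a₀ ⊔ a₁) ⊥ (.inl le_sup_left) (.inl le_sup_right)
  have hbot_sup := box ⊥ (b₀ ⊔ b₁) (.inr le_sup_left) (.inr le_sup_right)
  have h₀₁ := box a₀ b₁ (.inl le_rfl) (.inr le_rfl)
  have h₁₀ := box a₁ b₀ (.inr le_rfl) (.inl le_rfl)
  simp only [Set.mem_union, mem_pureTens, le_inf_iff, isBot_iff_eq_bot,
    le_bot_iff] at hsup_bot hbot_sup h₀₁ h₁₀ ⊢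
  tauto

lemma subset_boxCl_pureTens_union_pureTens (a₀ a₁ : A) (b₀ b₁ : B) :
    pureTens a₀ b₀ ∪ pureTens a₁ b₁ ∪ pureTens (a₀ ⊔ a₁) (b₀ ⊓ b₁) ∪
        pureTens (a₀ ⊓ a₁) (b₀ ⊔ b₁) ⊆ BoxCl (pureTens a₀ b₀ ∪ pureTens a₁ b₁) := by
  refine Set.union_subset (Set.union_subset (subset_boxCl _) ?_) ?_ <;>
  · refine pureTens_subset_boxCl fun u v h => ?_
    obtain ⟨h₀ | h₀, h₁ | h₁⟩ := pureTens_union_subset_pureBox_iff.1 h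
    all_goals simp_all [sup_le_iff, inf_le_of_left_le, inf_le_of_right_le]

lemma boxCl_pureTens_union_pureTens [OrderBot A] [OrderBot B] (a₀ a₁ : A) (b₀ b₁ : B) :
    BoxCl (pureTens a₀ b₀ ∪ pureTens a₁ b₁) =
      pureTens a₀ b₀ ∪ pureTens a₁ b₁ ∪ pureTens (a₀ ⊔ a₁) (b₀ ⊓ b₁) ∪
        pureTens (a₀ ⊓ a₁) (b₀ ⊔ b₁) :=
  (boxCl_pureTens_union_pureTens_subset a₀ a₁ b₀ b₁).antisymm
    (subset_boxCl_pureTens_union_pureTens a₀ a₁ b₀ b₁)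

lemma boxCl_pureTens_union_pureTens_of_le_of_le [OrderBot A] [OrderBot B] {a₀ a₁ : A}
    {b₀ b₁ : B} (ha : a₀ ≤ a₁) (hb : b₁ ≤ b₀) :
    BoxCl (pureTens a₀ b₀ ∪ pureTens a₁ b₁) = pureTens a₀ b₀ ∪ pureTens a₁ b₁ := by
  rw [boxCl_pureTens_union_pureTens, sup_eq_right.2 ha, inf_eq_right.2 hb, inf_eq_left.2 ha,
    sup_eq_left.2 hb, Set.union_eq_left.2 (Set.subset_union_left.trans Set.subset_union_left),
    Set.union_eq_left.2 Set.subset_union_right]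

end PureTensor

/-- Arithmetic of pure lattice tensors: meet and join formulas in `A ⊠ B`
(where the join of `H` and `K` is `BoxCl (H ∪ K)`). -/
theorem stmt_13 {A B : Type*} [Lattice A] [OrderBot A] [Lattice B] [OrderBot B]
    (a₀ a₁ : A) (b₀ b₁ : B) :
    (pureTens a₀ b₀ ∩ pureTens a₁ b₁ = pureTens (a₀ ⊓ a₁) (b₀ ⊓ b₁)) ∧
    (BoxCl (pureTens a₀ b₀ ∪ pureTens a₁ b₁) =
      pureTens a₀ b₀ ∪ pureTens a₁ b₁ ∪ pureTens (a₀ ⊔ a₁) (b₀ ⊓ b₁) ∪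
        pureTens (a₀ ⊓ a₁) (b₀ ⊔ b₁)) ∧
    ((a₀ ≤ a₁ ∧ b₁ ≤ b₀) ∨ (a₁ ≤ a₀ ∧ b₀ ≤ b₁) →
      BoxCl (pureTens a₀ b₀ ∪ pureTens a₁ b₁) = pureTens a₀ b₀ ∪ pureTens a₁ b₁) := by
  refine ⟨pureTens_inter_pureTens a₀ a₁ b₀ b₁, boxCl_pureTens_union_pureTens a₀ a₁ b₀ b₁, ?_⟩
  rintro (⟨ha, hb⟩ | ⟨ha, hb⟩)
  · exact boxCl_pureTens_union_pureTens_of_le_of_le ha hb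
  · rw [Set.union_comm]
    exact boxCl_pureTens_union_pureTens_of_le_of_le ha hb
end
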